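/- Let −∞ ≤ a < b ≤ ∞ and let I be one of the intervals (a,b), (a,b], [a,b), [a,b]. Let α, β : I → ℝ be continuous and let A(t) be the 2×2 real matrix with rows (α(t), β(t)) and (−β(t), α(t)). Suppose that κ₃₁(t) := ∫_t^b e^{−∫_t^s α(τ) dτ} ds exists (as a finite, possibly improper, integral) for all t ∈ I, and that K₃₁ := sup_{t∈I} κ₃₁(t) < ∞. Then the system x' = A(t)x is Ulam stable on I with Ulam constant K₃₁ (with respect to the Euclidean norm on ℝ²). Furthermore, if in addition lim_{t→b⁻} ∫_{t₀}^t α(s) ds = ∞ for t₀ ∈ (a,b), then for every ε > 0 and every continuously differentiable φ : I → ℝ² with sup_{t∈I} ‖φ'(t) − A(t)φ(t)‖₂ ≤ ε, there exists a unique solution x of x' = A(t)x satisfying sup_{t∈I} ‖φ(t) − x(t)‖₂ ≤ K₃₁ε. -/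

import Mathlib

open MeasureTheory Filter Set

noncomputable section

/-- The Euclidean norm `√(v₁² + v₂²)` on `ℝ²`. -/
def enorm2 (v : Fin 2 → ℝ) : ℝ := Real.sqrt ((v 0) ^ 2 + (v 1) ^ 2)

/-- Ulam stability on `I` with constant `K` for the system `x' = A(t) x` on `ℝ²`,
with respect to the Euclidean norm. -/
def UlamStable2R (I : Set ℝ) (A : ℝ → Matrix (Fin 2) (Fin 2) ℝ) (K : ℝ) : Prop :=
  0 < K ∧
  ∀ ε : ℝ, 0 < ε →
    ∀ φ φd : ℝ → Fin 2 → ℝ,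
      (∀ t ∈ I, HasDerivWithinAt φ (φd t) I t) →
      ContinuousOn φd I →
      (∀ t ∈ I, enorm2 (φd t - (A t).mulVec (φ t)) ≤ ε) →
      ∃ x : ℝ → Fin 2 → ℝ,
        (∀ t ∈ I, HasDerivWithinAt x ((A t).mulVec (x t)) I t) ∧
        ∀ t ∈ I, enorm2 (φ t - x t) ≤ K * ε

/-- `κ₃₁(t) = ∫_t^b exp(-∫_t^s α) ds`. -/
def kappa31 (b : EReal) (al : ℝ → ℝ) (t : ℝ) : ℝ :=
  ∫ s in {s : ℝ | t < s ∧ (s : EReal) < b}, Real.exp (-∫ τ in t..s, al τ)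

/-!
Identifying `ℝ²` with `ℂ` via `v ↦ v 0 + v 1 * i` turns the system into the scalar equation
`z' = p z` with `p = α - iβ`, whose solutions are `C * exp P` for a primitive `P` of `p`.
If `φ` has defect `q = φ' - p φ` with `‖q‖ ≤ ε`, variation of constants gives the exact solution
`x t = φ t + exp (P t) * ∫_t^b exp (-P s) q s ds`, and since `|exp (P t - P s)| = exp (-∫_t^s α)`
we get `‖φ t - x t‖ ≤ ε κ₃₁(t)`. Two solutions close to the same `φ` differ by `C * exp P`,
of modulus `‖C‖ exp (∫_{t₀}^t α)`; it stays bounded as `t → b` only if `C = 0` once `∫ α → ∞`.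
-/

open Complex intervalIntegral Topology

def realIoo (t : ℝ) (b : EReal) : Set ℝ := {s : ℝ | t < s ∧ (s : EReal) < b}

lemma measurableSet_realIoo (t : ℝ) (b : EReal) : MeasurableSet (realIoo t b) :=
  measurableSet_Ioi.inter (measurableSet_lt measurable_coe_real_ereal measurable_const)

lemma exists_Icc_mem_nhdsWithin_of_mem {α : Type*} [LinearOrder α] [TopologicalSpace α]
    [OrderTopology α] {I : Set α} {t : α} (ht : t ∈ I) :
    ∃ t₁ ∈ I, ∃ t₂ ∈ I, t ∈ Icc t₁ t₂ ∧ Icc t₁ t₂ ∈ 𝓝[I] t := by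
  obtain ⟨t₂, ht₂, htt₂, hright⟩ : ∃ t₂ ∈ I, t ≤ t₂ ∧ Icc t t₂ ∈ 𝓝[I ∩ Ici t] t := by
    by_cases h : ∃ u ∈ I, t < u
    · obtain ⟨u, hu, htu⟩ := h
      exact ⟨u, hu, htu.le, nhdsWithin_mono _ inter_subset_right (Icc_mem_nhdsGE htu)⟩
    · push Not at h
      exact ⟨t, ht, le_rfl, mem_of_superset self_mem_nhdsWithin fun u hu => ⟨hu.2, h u hu.1⟩⟩
  obtain ⟨t₁, ht₁, ht₁t, hleft⟩ : ∃ t₁ ∈ I, t₁ ≤ t ∧ Icc t₁ t ∈ 𝓝[I ∩ Iic t] t := by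
    by_cases h : ∃ u ∈ I, u < t
    · obtain ⟨u, hu, hut⟩ := h
      exact ⟨u, hu, hut.le, nhdsWithin_mono _ inter_subset_right (Icc_mem_nhdsLE hut)⟩
    · push Not at h
      exact ⟨t, ht, le_rfl, mem_of_superset self_mem_nhdsWithin fun u hu => ⟨h u hu.1, hu.2⟩⟩
  have hsplit : I = (I ∩ Iic t) ∪ (I ∩ Ici t) := by
    rw [← inter_union_distrib_left, Iic_union_Ici, inter_univ]
  refine ⟨t₁, ht₁, t₂, ht₂, ⟨ht₁t, htt₂⟩, ?_⟩
  rw [hsplit, nhdsWithin_union]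
  exact ⟨mem_of_superset hleft (Icc_subset_Icc_right htt₂),
    mem_of_superset hright (Icc_subset_Icc_left ht₁t)⟩

section Integrals

variable {E : Type*} [NormedAddCommGroup E] [NormedSpace ℝ E] {I : Set ℝ} {f : ℝ → E}

theorem hasDerivWithinAt_intervalIntegral_of_ordConnected [CompleteSpace E] (hI : I.OrdConnected)
    (hf : ContinuousOn f I) {t₀ t : ℝ} (ht₀ : t₀ ∈ I) (ht : t ∈ I) :
    HasDerivWithinAt (fun u => ∫ s in t₀..u, f s) (f t) I t := by
  obtain ⟨t₁, ht₁, t₂, ht₂, htmem, hnhds⟩ := exists_Icc_mem_nhdsWithin_of_mem ht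
  have : Fact (t ∈ Icc t₁ t₂) := ⟨htmem⟩
  have hf' : ContinuousOn f (Icc t₁ t₂) := hf.mono (hI.out ht₁ ht₂)
  refine HasDerivWithinAt.mono_of_mem_nhdsWithin ?_ hnhds
  exact integral_hasDerivWithinAt_right ((hf.mono (hI.uIcc_subset ht₀ ht)).intervalIntegrable)
    (hf'.stronglyMeasurableAtFilter_nhdsWithin measurableSet_Icc t) (hf' t htmem)

theorem integral_realIoo_eq_intervalIntegral_add {b : EReal} {t₁ t₂ : ℝ} (h : t₁ ≤ t₂)
    (hb : (t₂ : EReal) ≤ b) (hf : IntegrableOn f (realIoo t₁ b)) :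
    ∫ s in realIoo t₁ b, f s = (∫ s in t₁..t₂, f s) + ∫ s in realIoo t₂ b, f s := by
  have hunion : realIoo t₁ b = (Ioc t₁ t₂ ∩ {s | (s : EReal) < b}) ∪ realIoo t₂ b := by
    change Ioi t₁ ∩ {s : ℝ | (s : EReal) < b} = _ ∪ Ioi t₂ ∩ {s : ℝ | (s : EReal) < b}
    rw [← union_inter_distrib_right, Ioc_union_Ioi_eq_Ioi h]
  have hIoc : (Ioc t₁ t₂ ∩ {s | (s : EReal) < b} : Set ℝ) =ᵐ[volume] Ioc t₁ t₂ :=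
    (inter_subset_left.eventuallyLE).antisymm <| Ioo_ae_eq_Ioc.symm.le.trans <|
      LE.le.eventuallyLE fun s hs => ⟨Ioo_subset_Ioc_self hs,
        lt_of_lt_of_le (EReal.coe_lt_coe_iff.2 hs.2) hb⟩
  rw [hunion, setIntegral_union _ (measurableSet_realIoo t₂ b)
      (hf.mono_set (hunion ▸ subset_union_left)) (hf.mono_set (hunion ▸ subset_union_right)),
    setIntegral_congr_set hIoc, integral_of_le h]
  exact disjoint_left.2 fun s hs hs' => not_lt.2 hs.1.2 hs'.1

theorem hasDerivWithinAt_integral_realIoo [CompleteSpace E] (hI : I.OrdConnected)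
    (hf : ContinuousOn f I) {b : EReal} (hIb : ∀ t ∈ I, (t : EReal) ≤ b)
    (hint : ∀ t ∈ I, IntegrableOn f (realIoo t b)) {t : ℝ} (ht : t ∈ I) :
    HasDerivWithinAt (fun u => ∫ s in realIoo u b, f s) (-f t) I t := by
  have hshift : ∀ u ∈ I,
      ∫ s in realIoo u b, f s = (∫ s in realIoo t b, f s) - ∫ s in t..u, f s := by
    intro u hu
    rcases le_total t u with htu | hut
    · rw [integral_realIoo_eq_intervalIntegral_add htu (hIb u hu) (hint t ht)]
      abel
    · rw [integral_realIoo_eq_intervalIntegral_add hut (hIb t ht) (hint u hu),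
        integral_symm u t]
      abel
  exact ((hasDerivWithinAt_intervalIntegral_of_ordConnected hI hf ht ht).const_sub _).congr
    hshift (hshift t ht)

end Integrals

section ScalarEquation

variable {I : Set ℝ} {p : ℝ → ℂ}

lemma norm_cexp_intervalIntegral {a b : ℝ} (hp : IntervalIntegrable p volume a b) :
    ‖cexp (∫ τ in a..b, p τ)‖ = Real.exp (∫ τ in a..b, (p τ).re) := by
  rw [norm_exp, ← RCLike.re_eq_complex_re, ← intervalIntegral_re hp]

lemma eq_mul_cexp_of_hasDerivWithinAt (hI : I.OrdConnected) (hp : ContinuousOn p I) {t₀ : ℝ}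
    (ht₀ : t₀ ∈ I) {u : ℝ → ℂ} (hu : ∀ t ∈ I, HasDerivWithinAt u (p t * u t) I t) {t : ℝ}
    (ht : t ∈ I) : u t = u t₀ * cexp (∫ τ in t₀..t, p τ) := by
  have hP : ∀ t ∈ I, HasDerivWithinAt (fun s => ∫ τ in t₀..s, p τ) (p t) I t :=
    fun t ht => hasDerivWithinAt_intervalIntegral_of_ordConnected hI hp ht₀ ht
  have hconst :
      ∀ s ∈ I, HasDerivWithinAt (fun s => cexp (-∫ τ in t₀..s, p τ) * u s) 0 I s := by
    intro s hs
    refine (((hP s hs).neg.cexp).mul (hu s hs)).congr_deriv ?_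
    simp only [Pi.neg_apply]
    ring
  have := Convex.norm_image_sub_le_of_norm_hasDerivWithin_le hconst (fun _ _ => (norm_zero).le)
    hI.convex ht₀ ht
  simp only [zero_mul, norm_le_zero_iff, sub_eq_zero, integral_same, neg_zero, exp_zero,
    one_mul] at this
  rw [← this, mul_right_comm, ← exp_add, neg_add_cancel, exp_zero, one_mul]

lemma norm_cexp_mul_cexp_neg (hI : I.OrdConnected) (hp : ContinuousOn p I) {t₀ t s : ℝ}
    (ht₀ : t₀ ∈ I) (ht : t ∈ I) (hs : s ∈ I) :
    ‖cexp (∫ τ in t₀..t, p τ) * cexp (-∫ τ in t₀..s, p τ)‖ =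
      Real.exp (-∫ τ in t..s, (p τ).re) := by
  have hint : ∀ {t₁ t₂}, t₁ ∈ I → t₂ ∈ I → IntervalIntegrable p volume t₁ t₂ :=
    fun h₁ h₂ => (hp.mono (hI.uIcc_subset h₁ h₂)).intervalIntegrable
  rw [← exp_add, ← sub_eq_add_neg, ← neg_sub,
    integral_interval_sub_left (hint ht₀ hs) (hint ht₀ ht), exp_neg, norm_inv, norm_cexp_intervalIntegral (hint ht hs), Real.exp_neg]

theorem eqOn_zero_of_hasDerivWithinAt_mul_of_norm_le (hI : I.OrdConnected)
    (hp : ContinuousOn p I) {t₀ : ℝ} (ht₀ : t₀ ∈ I) {u : ℝ → ℂ}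
    (hu : ∀ t ∈ I, HasDerivWithinAt u (p t * u t) I t) {M : ℝ} (hM : ∀ t ∈ I, ‖u t‖ ≤ M)
    {l : Filter ℝ} [l.NeBot] (hlI : ∀ᶠ t in l, t ∈ I)
    (hl : Tendsto (fun t => ∫ τ in t₀..t, (p τ).re) l atTop) : EqOn u 0 I := by
  have hnorm : ∀ t ∈ I, ‖u t‖ = ‖u t₀‖ * Real.exp (∫ τ in t₀..t, (p τ).re) := fun t ht => by
    rw [eq_mul_cexp_of_hasDerivWithinAt hI hp ht₀ hu ht, norm_mul,
      norm_cexp_intervalIntegral ((hp.mono (hI.uIcc_subset ht₀ ht)).intervalIntegrable)]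
  have hu₀ : u t₀ = 0 := by
    by_contra h
    have hgrow : Tendsto (fun t => ‖u t₀‖ * Real.exp (∫ τ in t₀..t, (p τ).re)) l atTop :=
      (Real.tendsto_exp_atTop.comp hl).const_mul_atTop (norm_pos_iff.2 h)
    obtain ⟨t, hMt, ht⟩ := ((hgrow.eventually_gt_atTop M).and hlI).exists
    linarith [hM t ht, hnorm t ht]
  intro t ht
  rw [eq_mul_cexp_of_hasDerivWithinAt hI hp ht₀ hu ht, hu₀, zero_mul, Pi.zero_apply]

lemma hasDerivWithinAt_add_cexp_mul {z P g : ℝ → ℂ} {w p₀ : ℂ} {s : Set ℝ} {t : ℝ}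
    (hz : HasDerivWithinAt z w s t) (hP : HasDerivWithinAt P p₀ s t)
    (hg : HasDerivWithinAt g (-(cexp (-P t) * (w - p₀ * z t))) s t) :
    HasDerivWithinAt (fun u => z u + cexp (P u) * g u) (p₀ * (z t + cexp (P t) * g t)) s t := by
  refine (hz.add (hP.cexp.mul hg)).congr_deriv ?_
  have hexp : cexp (P t) * cexp (-P t) = 1 := by rw [← exp_add, add_neg_cancel, exp_zero]
  linear_combination -(w - p₀ * z t) * hexp

theorem exists_hasDerivWithinAt_mul_norm_sub_le (hI : I.OrdConnected) (hp : ContinuousOn p I)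
    {b : EReal} (hIb : ∀ t ∈ I, (t : EReal) ≤ b) (htail : ∀ t ∈ I, realIoo t b ⊆ I)
    (hker : ∀ t ∈ I,
      IntegrableOn (fun s => Real.exp (-∫ τ in t..s, (p τ).re)) (realIoo t b))
    {z w : ℝ → ℂ} (hz : ∀ t ∈ I, HasDerivWithinAt z (w t) I t) (hw : ContinuousOn w I)
    {ε : ℝ} (hε : ∀ t ∈ I, ‖w t - p t * z t‖ ≤ ε) :
    ∃ x : ℝ → ℂ, (∀ t ∈ I, HasDerivWithinAt x (p t * x t) I t) ∧
      ∀ t ∈ I, ‖z t - x t‖ ≤ ε * kappa31 b (fun τ => (p τ).re) t := by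
  rcases I.eq_empty_or_nonempty with rfl | ⟨t₀, ht₀⟩
  · exact ⟨z, by simp, by simp⟩
  set P : ℝ → ℂ := fun t => ∫ τ in t₀..t, p τ
  set f : ℝ → ℂ := fun s => cexp (-P s) * (w s - p s * z s)
  have hP : ∀ t ∈ I, HasDerivWithinAt P (p t) I t :=
    fun t ht => hasDerivWithinAt_intervalIntegral_of_ordConnected hI hp ht₀ ht
  have hf : ContinuousOn f I :=
    (ContinuousOn.neg fun t ht => (hP t ht).continuousWithinAt).cexp.mul
      (hw.sub (hp.mul fun t ht => (hz t ht).continuousWithinAt))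
  have hbound : ∀ t ∈ I, ∀ s ∈ realIoo t b,
      ‖cexp (P t) * f s‖ ≤ ε * Real.exp (-∫ τ in t..s, (p τ).re) := by
    intro t ht s hs
    rw [← mul_assoc, norm_mul, norm_cexp_mul_cexp_neg hI hp ht₀ ht (htail t ht hs), mul_comm]
    exact mul_le_mul_of_nonneg_right (hε s (htail t ht hs)) (Real.exp_pos _).le
  have hfint : ∀ t ∈ I, IntegrableOn f (realIoo t b) := by
    intro t ht
    refine Integrable.mono' ((hker t ht).const_mul (‖cexp (-P t)‖ * ε))
      ((hf.mono (htail t ht)).aestronglyMeasurable (measurableSet_realIoo t b)) ?_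
    refine (ae_restrict_iff' (measurableSet_realIoo t b)).2 (ae_of_all _ fun s hs => ?_)
    have hfs : f s = cexp (-P t) * (cexp (P t) * f s) := by
      rw [← mul_assoc, ← exp_add, neg_add_cancel, exp_zero, one_mul]
    rw [hfs, norm_mul, mul_assoc]
    exact mul_le_mul_of_nonneg_left (hbound t ht s hs) (norm_nonneg _)
  set g : ℝ → ℂ := fun t => ∫ s in realIoo t b, f s
  refine ⟨fun t => z t + cexp (P t) * g t, fun t ht => hasDerivWithinAt_add_cexp_mul (hz t ht)
    (hP t ht) (hasDerivWithinAt_integral_realIoo hI hf hIb hfint ht), fun t ht => ?_⟩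
  calc ‖z t - (z t + cexp (P t) * g t)‖ = ‖∫ s in realIoo t b, cexp (P t) * f s‖ := by
        rw [sub_add_cancel_left, norm_neg, MeasureTheory.integral_const_mul]
    _ ≤ ∫ s in realIoo t b, ε * Real.exp (-∫ τ in t..s, (p τ).re) :=
        norm_integral_le_of_norm_le ((hker t ht).const_mul ε)
          ((ae_restrict_iff' (measurableSet_realIoo t b)).2 (ae_of_all _ (hbound t ht)))
    _ = ε * kappa31 b (fun τ => (p τ).re) t := MeasureTheory.integral_const_mul _ _

end ScalarEquation

def finTwoToComplex : (Fin 2 → ℝ) ≃L[ℝ] ℂ :=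
  (ContinuousLinearEquiv.finTwoArrow ℝ ℝ).trans equivRealProdCLM.symm

lemma enorm2_eq_norm_finTwoToComplex (v : Fin 2 → ℝ) : enorm2 v = ‖finTwoToComplex v‖ := by
  rw [enorm2, norm_def, normSq_apply]
  simp only [pow_two]
  rfl

lemma finTwoToComplex_mulVec (α β : ℝ) (v : Fin 2 → ℝ) :
    finTwoToComplex ((!![α, β; -β, α]).mulVec v) = (α - β * I) * finTwoToComplex v := by
  apply Complex.ext
  · simp [finTwoToComplex, dotProduct, Fin.sum_univ_two]
  · simp [finTwoToComplex, dotProduct, Fin.sum_univ_two]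
    ring

lemma hasDerivWithinAt_finTwoToComplex_comp_iff {x : ℝ → Fin 2 → ℝ} {x' : Fin 2 → ℝ}
    {s : Set ℝ} {t : ℝ} :
    HasDerivWithinAt (fun u => finTwoToComplex (x u)) (finTwoToComplex x') s t ↔
      HasDerivWithinAt x x' s t :=
  ⟨fun h => by
    simpa [Function.comp_def] using finTwoToComplex.symm.hasFDerivAt.comp_hasDerivWithinAt t h,
    fun h => finTwoToComplex.hasFDerivAt.comp_hasDerivWithinAt t h⟩

lemma hasDerivWithinAt_mulVec_iff {x : ℝ → Fin 2 → ℝ} {α β : ℝ} {s : Set ℝ} {t : ℝ} :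
    HasDerivWithinAt x ((!![α, β; -β, α]).mulVec (x t)) s t ↔
      HasDerivWithinAt (fun u => finTwoToComplex (x u)) ((α - β * I) * finTwoToComplex (x t))
        s t := by
  rw [← finTwoToComplex_mulVec, hasDerivWithinAt_finTwoToComplex_comp_iff]

section RotationSystem

variable {I : Set ℝ} {al be : ℝ → ℝ}

lemma continuousOn_rotationRate (hal : ContinuousOn al I) (hbe : ContinuousOn be I) :
    ContinuousOn (fun t => (al t : ℂ) - be t * Complex.I) I :=
  (continuous_ofReal.comp_continuousOn hal).sub
    ((continuous_ofReal.comp_continuousOn hbe).mul continuousOn_const)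

theorem exists_solution_enorm2_sub_le (hI : I.OrdConnected) (hal : ContinuousOn al I)
    (hbe : ContinuousOn be I) {b : EReal} (hIb : ∀ t ∈ I, (t : EReal) ≤ b)
    (htail : ∀ t ∈ I, realIoo t b ⊆ I)
    (hker : ∀ t ∈ I, IntegrableOn (fun s => Real.exp (-∫ τ in t..s, al τ)) (realIoo t b))
    {φ φd : ℝ → Fin 2 → ℝ} (hφ : ∀ t ∈ I, HasDerivWithinAt φ (φd t) I t)
    (hφd : ContinuousOn φd I) {ε : ℝ}
    (hε : ∀ t ∈ I, enorm2 (φd t - (!![al t, be t; -(be t), al t]).mulVec (φ t)) ≤ ε) :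
    ∃ x : ℝ → Fin 2 → ℝ,
      (∀ t ∈ I, HasDerivWithinAt x ((!![al t, be t; -(be t), al t]).mulVec (x t)) I t) ∧
        ∀ t ∈ I, enorm2 (φ t - x t) ≤ ε * kappa31 b al t := by
  have hre : (fun t => ((al t : ℂ) - be t * Complex.I).re) = al := by ext; simp
  obtain ⟨ξ, hξ, hξφ⟩ := exists_hasDerivWithinAt_mul_norm_sub_le hI
    (continuousOn_rotationRate hal hbe) hIb htail (by simpa using hker)
    (fun t ht => hasDerivWithinAt_finTwoToComplex_comp_iff.2 (hφ t ht))
    (finTwoToComplex.continuous.comp_continuousOn hφd) fun t ht => by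
      rw [← finTwoToComplex_mulVec, ← map_sub, ← enorm2_eq_norm_finTwoToComplex]
      exact hε t ht
  refine ⟨fun t => finTwoToComplex.symm (ξ t), fun t ht => ?_, fun t ht => ?_⟩
  · rw [hasDerivWithinAt_mulVec_iff]
    simpa using hξ t ht
  · simpa [enorm2_eq_norm_finTwoToComplex, hre] using hξφ t ht

theorem eqOn_of_enorm2_sub_le (hI : I.OrdConnected) (hal : ContinuousOn al I)
    (hbe : ContinuousOn be I) {t₀ : ℝ} (ht₀ : t₀ ∈ I) {φ x y : ℝ → Fin 2 → ℝ}
    (hx : ∀ t ∈ I, HasDerivWithinAt x ((!![al t, be t; -(be t), al t]).mulVec (x t)) I t)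
    (hy : ∀ t ∈ I, HasDerivWithinAt y ((!![al t, be t; -(be t), al t]).mulVec (y t)) I t)
    {M : ℝ} (hxM : ∀ t ∈ I, enorm2 (φ t - x t) ≤ M) (hyM : ∀ t ∈ I, enorm2 (φ t - y t) ≤ M)
    {l : Filter ℝ} [l.NeBot] (hlI : ∀ᶠ t in l, t ∈ I)
    (hl : Tendsto (fun t => ∫ τ in t₀..t, al τ) l atTop) : EqOn x y I := by
  have hdiff : EqOn (fun t => finTwoToComplex (x t) - finTwoToComplex (y t)) 0 I := by
    refine eqOn_zero_of_hasDerivWithinAt_mul_of_norm_le hI (continuousOn_rotationRate hal hbe)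
      ht₀ (fun t ht => ?_) (M := 2 * M) (fun t ht => ?_) hlI (by simpa using hl)
    · refine ((hasDerivWithinAt_mulVec_iff.1 (hx t ht)).sub
        (hasDerivWithinAt_mulVec_iff.1 (hy t ht))).congr_deriv ?_
      ring
    · have hxt := hxM t ht
      have hyt := hyM t ht
      rw [enorm2_eq_norm_finTwoToComplex, map_sub] at hxt hyt
      rw [← sub_sub_sub_cancel_left _ _ (finTwoToComplex (φ t))]
      linarith [norm_sub_le (finTwoToComplex (φ t) - finTwoToComplex (y t))
        (finTwoToComplex (φ t) - finTwoToComplex (x t))]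
  intro t ht
  exact finTwoToComplex.injective (sub_eq_zero.1 (hdiff ht))

end RotationSystem

lemma EReal.comap_coe_nhdsLT_neBot {b : EReal} (hb : ⊥ < b) :
    (comap ((↑) : ℝ → EReal) (𝓝[<] b)).NeBot := by
  refine comap_neBot fun s hs => ?_
  obtain ⟨c, hcb, hcs⟩ := (mem_nhdsLT_iff_exists_Ioo_subset' hb).1 hs
  obtain ⟨x, hcx, hxb⟩ := EReal.exists_between_coe_real hcb
  exact ⟨x, hcs ⟨hcx, hxb⟩⟩

lemma ordConnected_of_forall_mem {a b : EReal} {I : Set ℝ}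
    (hI1 : ∀ x : ℝ, a < (x : EReal) → (x : EReal) < b → x ∈ I)
    (hI2 : ∀ x ∈ I, a ≤ (x : EReal) ∧ (x : EReal) ≤ b) : I.OrdConnected := by
  refine ⟨fun x hx y hy u hu => ?_⟩
  rcases hu.1.eq_or_lt with rfl | hxu
  · exact hx
  rcases hu.2.eq_or_lt with rfl | huy
  · exact hy
  exact hI1 u ((hI2 x hx).1.trans_lt (EReal.coe_lt_coe_iff.2 hxu))
    ((EReal.coe_lt_coe_iff.2 huy).trans_le (hI2 y hy).2)

lemma kappa31_pos {b : EReal} {al : ℝ → ℝ} {t : ℝ} (htb : (t : EReal) < b)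
    (hint : IntegrableOn (fun s => Real.exp (-∫ τ in t..s, al τ)) (realIoo t b)) :
    0 < kappa31 b al t := by
  obtain ⟨m, htm, hmb⟩ := EReal.exists_between_coe_real htb
  have hsupp : Function.support (fun s => Real.exp (-∫ τ in t..s, al τ)) = univ :=
    Function.support_eq_univ fun s => (Real.exp_pos _).ne'
  refine (setIntegral_pos_iff_support_of_nonneg_ae
    (ae_of_all _ fun s => (Real.exp_pos _).le) hint).2 ?_
  rw [hsupp, univ_inter]
  refine lt_of_lt_of_le ?_ (measure_mono fun s (hs : s ∈ Ioo t m) =>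
    ⟨hs.1, (EReal.coe_lt_coe_iff.2 hs.2).trans hmb⟩)
  rw [Real.volume_Ioo, ENNReal.ofReal_pos, sub_pos]
  exact EReal.coe_lt_coe_iff.1 htm

theorem statement15 (a b : EReal) (hab : a < b) (I : Set ℝ)
    (hI1 : ∀ x : ℝ, a < (x : EReal) → (x : EReal) < b → x ∈ I)
    (hI2 : ∀ x ∈ I, a ≤ (x : EReal) ∧ (x : EReal) ≤ b)
    (al be : ℝ → ℝ) (hal : ContinuousOn al I) (hbe : ContinuousOn be I)
    (hker : ∀ t ∈ I, IntegrableOn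
      (fun s => Real.exp (-∫ τ in t..s, al τ)) {s : ℝ | t < s ∧ (s : EReal) < b})
    (hbdd : BddAbove (kappa31 b al '' I)) :
    UlamStable2R I (fun t => !![al t, be t; -(be t), al t]) (sSup (kappa31 b al '' I)) ∧
    ((∀ t₀ : ℝ, a < (t₀ : EReal) → (t₀ : EReal) < b →
        Tendsto (fun t => ∫ s in t₀..t, al s)
          (Filter.comap (fun x : ℝ => (x : EReal)) (nhdsWithin b (Iio b))) atTop) →
      ∀ ε : ℝ, 0 < ε → ∀ φ φd : ℝ → Fin 2 → ℝ,
        (∀ t ∈ I, HasDerivWithinAt φ (φd t) I t) →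
        ContinuousOn φd I →
        (∀ t ∈ I, enorm2 (φd t - (!![al t, be t; -(be t), al t]).mulVec (φ t)) ≤ ε) →
        ∃ x : ℝ → Fin 2 → ℝ,
          ((∀ t ∈ I, HasDerivWithinAt x ((!![al t, be t; -(be t), al t]).mulVec (x t)) I t) ∧
            ∀ t ∈ I, enorm2 (φ t - x t) ≤ sSup (kappa31 b al '' I) * ε) ∧
          ∀ y : ℝ → Fin 2 → ℝ,
            ((∀ t ∈ I, HasDerivWithinAt y ((!![al t, be t; -(be t), al t]).mulVec (y t)) I t) ∧
              ∀ t ∈ I, enorm2 (φ t - y t) ≤ sSup (kappa31 b al '' I) * ε) →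
            EqOn y x I) := by
  obtain ⟨t₀, hat₀, ht₀b⟩ := EReal.exists_between_coe_real hab
  have ht₀ : t₀ ∈ I := hI1 t₀ hat₀ ht₀b
  have hI : I.OrdConnected := ordConnected_of_forall_mem hI1 hI2
  have htail : ∀ t ∈ I, realIoo t b ⊆ I := fun t ht s hs =>
    hI1 s ((hI2 t ht).1.trans_lt (EReal.coe_lt_coe_iff.2 hs.1)) hs.2
  have hκ : ∀ t ∈ I, kappa31 b al t ≤ sSup (kappa31 b al '' I) :=
    fun t ht => le_csSup hbdd ⟨t, ht, rfl⟩
  have hstab :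
      UlamStable2R I (fun t => !![al t, be t; -(be t), al t]) (sSup (kappa31 b al '' I)) := by
    refine ⟨(kappa31_pos ht₀b (hker t₀ ht₀)).trans_le (hκ t₀ ht₀),
      fun ε hε φ φd hφ hφd hφε => ?_⟩
    obtain ⟨x, hx, hxφ⟩ := exists_solution_enorm2_sub_le hI hal hbe (fun t ht => (hI2 t ht).2)
      htail hker hφ hφd hφε
    exact ⟨x, hx, fun t ht => (hxφ t ht).trans <| by
      rw [mul_comm]; exact mul_le_mul_of_nonneg_right (hκ t ht) hε.le⟩
  refine ⟨hstab, fun hlim ε hε φ φd hφ hφd hφε => ?_⟩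
  obtain ⟨x, hx, hxφ⟩ := hstab.2 ε hε φ φd hφ hφd hφε
  have := EReal.comap_coe_nhdsLT_neBot (bot_le.trans_lt hab)
  have hlI : ∀ᶠ t in comap ((↑) : ℝ → EReal) (𝓝[<] b), t ∈ I :=
    mem_of_superset (preimage_mem_comap (inter_mem_nhdsWithin _ (lt_mem_nhds ht₀b))) fun t ht =>
      hI1 t (hat₀.trans ht.2) ht.1
  exact ⟨x, ⟨hx, hxφ⟩, fun y ⟨hy, hyφ⟩ =>
    eqOn_of_enorm2_sub_le hI hal hbe ht₀ hy hx hyφ hxφ hlI (hlim t₀ hat₀ ht₀b)⟩
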